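/- arXiv:2402.06337 — 2 statements merged into one kernel-verified Lean document; each statement's English description precedes it below -/
import Mathlib

section
/- Let a ≥ 0, b > 0, σ > 0 and 0 ≤ λ < μ be real numbers. Then the integral ∫₀^∞ x^{σ−1} e^{−μx} · ₁F₁(a; b; λx) dx converges and equals Γ(σ) · μ^{−σ} · ₂F₁(a, σ; b; λ/μ), where the ₂F₁ series converges since 0 ≤ λ/μ < 1. -/
open Real MeasureTheory Set

/-- Pochhammer symbol `(q)_n = q (q+1) ⋯ (q+n-1)`, with `(q)_0 = 1`. -/
noncomputable def poch (q : ℝ) (n : ℕ) : ℝ := ∏ i ∈ Finset.range n, (q + i)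

/-- Confluent (Kummer) hypergeometric function `₁F₁(a; b; z)`. -/
noncomputable def oneF1 (a b z : ℝ) : ℝ :=
  ∑' n : ℕ, (poch a n / poch b n) * z ^ n / (n.factorial : ℝ)

/-- Gauss hypergeometric function `₂F₁(a, b; c; z)`. -/
noncomputable def twoF1 (a b c z : ℝ) : ℝ :=
  ∑' n : ℕ, (poch a n * poch b n / poch c n) * z ^ n / (n.factorial : ℝ)

/-- Confluent Appell (Humbert) function `Φ₂(b₁, b₂; c; x, y)`. -/
noncomputable def Phi2 (b₁ b₂ c x y : ℝ) : ℝ :=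
  ∑' p : ℕ × ℕ, (poch b₁ p.1 * poch b₂ p.2 / poch c (p.1 + p.2)) *
    x ^ p.1 * y ^ p.2 / ((p.1.factorial : ℝ) * (p.2.factorial : ℝ))

/-!
Expand `₁F₁(a; b; λx) = ∑ (a)_n / (b)_n (λx)ⁿ / n!` and integrate term by term: the `n`-th term
gives the Gamma integral `∫₀^∞ x^{σ+n-1} e^{-μx} dx = Γ(σ + n) μ^{-σ-n} = Γ(σ) (σ)_n μ^{-σ-n}`,
which is `Γ(σ) μ^{-σ}` times the `n`-th term of `₂F₁(a, σ; b; λ/μ)`. With absolute values the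
same computation turns the integrals of `|term|` into the absolute values of these `₂F₁` terms,
which are summable at `|λ/μ| < 1`; this gives integrability and justifies the interchange.
-/

open Filter Topology

lemma poch_succ (q : ℝ) (n : ℕ) : poch q (n + 1) = poch q n * (q + n) :=
  Finset.prod_range_succ _ _

lemma poch_ne_zero {q : ℝ} (hq : ∀ k : ℕ, q + k ≠ 0) (n : ℕ) : poch q n ≠ 0 :=
  Finset.prod_ne_zero_iff.2 fun k _ => hq k

lemma poch_nonneg {q : ℝ} (hq : 0 ≤ q) (n : ℕ) : 0 ≤ poch q n :=
  Finset.prod_nonneg fun _ _ => by positivity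

lemma Gamma_add_natCast_eq_mul_poch {s : ℝ} (hs : ∀ k : ℕ, s + k ≠ 0) (n : ℕ) :
    Gamma (s + n) = Gamma s * poch s n := by
  induction n with
  | zero => simp [poch]
  | succ n ih =>
    rw [Nat.cast_succ, ← add_assoc, Gamma_add_one (hs n), ih, poch_succ]
    ring

/-- Unlike `summable_of_ratio_test_tendsto_lt_one`, the terms may vanish (as for `₂F₁`
at `a = 0`). -/
lemma summable_of_succ_eq_mul_of_tendsto {f g : ℕ → ℝ} (hfg : ∀ n, f (n + 1) = f n * g n)
    {L : ℝ} (hL : |L| < 1) (hg : Tendsto g atTop (𝓝 L)) : Summable f := by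
  refine summable_of_ratio_norm_eventually_le (r := (|L| + 1) / 2) (by linarith) ?_
  filter_upwards [hg.abs.eventually_lt_const (show |L| < (|L| + 1) / 2 by linarith)] with n hn
  rw [hfg, norm_mul, Real.norm_eq_abs (g n), mul_comm]
  exact mul_le_mul_of_nonneg_right hn.le (norm_nonneg _)

lemma tendsto_add_natCast_div_add_natCast (c d : ℝ) :
    Tendsto (fun n : ℕ => (c + n) / (d + n)) atTop (𝓝 1) := by
  simpa using tendsto_add_mul_div_add_mul_atTop_nhds c d (1 : ℝ) one_ne_zero

noncomputable def oneF1Term (a b z : ℝ) (n : ℕ) : ℝ :=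
  (poch a n / poch b n) * z ^ n / (n.factorial : ℝ)

noncomputable def twoF1Term (a b c z : ℝ) (n : ℕ) : ℝ :=
  (poch a n * poch b n / poch c n) * z ^ n / (n.factorial : ℝ)

lemma oneF1_eq_tsum (a b z : ℝ) : oneF1 a b z = ∑' n, oneF1Term a b z n := rfl

lemma twoF1_eq_tsum (a b c z : ℝ) : twoF1 a b c z = ∑' n, twoF1Term a b c z n := rfl

lemma twoF1Term_succ (a b : ℝ) {c : ℝ} (hc : ∀ k : ℕ, c + k ≠ 0) (z : ℝ) (n : ℕ) :
    twoF1Term a b c z (n + 1) =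
      twoF1Term a b c z n * ((a + n) / (c + n) * ((b + n) / (1 + n)) * z) := by
  have hpoch := poch_ne_zero hc n
  have hcn := hc n
  simp only [twoF1Term, poch_succ, pow_succ, Nat.factorial_succ, Nat.cast_mul, Nat.cast_succ]
  field_simp
  ring

lemma summable_twoF1Term (a b : ℝ) {c : ℝ} (hc : ∀ k : ℕ, c + k ≠ 0) {z : ℝ} (hz : |z| < 1) :
    Summable (twoF1Term a b c z) := by
  refine summable_of_succ_eq_mul_of_tendsto (twoF1Term_succ a b hc z) (L := 1 * 1 * z)
    (by simpa using hz) ?_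
  exact ((tendsto_add_natCast_div_add_natCast a c).mul
    (tendsto_add_natCast_div_add_natCast b 1)).mul_const z

lemma oneF1Term_mul (a b z w : ℝ) (n : ℕ) :
    oneF1Term a b (z * w) n = oneF1Term a b z n * w ^ n := by
  simp only [oneF1Term, mul_pow]
  ring

lemma twoF1Term_div (a s b z w : ℝ) (n : ℕ) :
    twoF1Term a s b (z / w) n = oneF1Term a b z n * (poch s n / w ^ n) := by
  simp only [twoF1Term, oneF1Term, div_pow]
  ring

lemma rpow_mul_exp_neg_mul_mul_pow_eqOn (s μ : ℝ) (n : ℕ) :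
    EqOn (fun x : ℝ => x ^ (s - 1) * exp (-μ * x) * x ^ n)
      (fun x => x ^ (s + n - 1) * exp (-(μ * x))) (Ioi 0) := by
  intro x (hx : 0 < x)
  dsimp only
  rw [show s + n - 1 = (s - 1) + n by ring, rpow_add hx, rpow_natCast, neg_mul]
  ring

lemma integrableOn_rpow_mul_exp_neg_mul_mul_pow {s μ : ℝ} (hs : 0 < s) (hμ : 0 < μ) (n : ℕ) :
    IntegrableOn (fun x : ℝ => x ^ (s - 1) * exp (-μ * x) * x ^ n) (Ioi 0) := by
  refine .congr_fun ?_ (rpow_mul_exp_neg_mul_mul_pow_eqOn s μ n).symm measurableSet_Ioi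
  simpa [rpow_one, neg_mul] using integrableOn_rpow_mul_exp_neg_mul_rpow
    (s := s + n - 1) (by linarith [n.cast_nonneg (α := ℝ)]) zero_lt_one hμ

lemma integral_rpow_mul_exp_neg_mul_mul_pow {s μ : ℝ} (hs : 0 < s) (hμ : 0 < μ) (n : ℕ) :
    ∫ x in Ioi 0, x ^ (s - 1) * exp (-μ * x) * x ^ n =
      Gamma s * μ ^ (-s) * (poch s n / μ ^ n) := by
  rw [setIntegral_congr_fun measurableSet_Ioi (rpow_mul_exp_neg_mul_mul_pow_eqOn s μ n),
    integral_rpow_mul_exp_neg_mul_Ioi (by positivity) hμ,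
    Gamma_add_natCast_eq_mul_poch (fun k => by positivity) n,
    rpow_add (by positivity), rpow_natCast, one_div, inv_rpow hμ.le, ← rpow_neg hμ.le, inv_pow]
  ring

theorem MeasureTheory.integrable_tsum_of_summable_integral_norm {α E ι : Type*}
    [MeasurableSpace α] {μ : Measure α} [NormedAddCommGroup E] [CompleteSpace E] [Countable ι]
    {F : ι → α → E} (hF_int : ∀ i, Integrable (F i) μ)
    (hF_sum : Summable fun i => ∫ a, ‖F i a‖ ∂μ) :
    Integrable (fun a => ∑' i, F i a) μ := by
  have hfin : ∑' i, ∫⁻ a, ‖F i a‖ₑ ∂μ ≠ ⊤ := by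
    simp_rw [← ofReal_integral_norm_eq_lintegral_enorm (hF_int _)]
    rw [← ENNReal.ofReal_tsum_of_nonneg (fun i => integral_nonneg fun _ => norm_nonneg _) hF_sum]
    exact ENNReal.ofReal_ne_top
  have hsummable : ∀ᵐ a ∂μ, Summable fun i => ‖F i a‖ :=
    summable_norm_of_tsum_eLpNorm_ne_top le_rfl (fun i => (hF_int i).1)
      (by simpa only [eLpNorm_one_eq_lintegral_enorm] using hfin)
  refine ⟨aestronglyMeasurable_of_tendsto_ae (atTop : Filter (Finset ι))
    (f := fun s a => ∑ i ∈ s, F i a) (fun s => ?_) ?_, ?_⟩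
  · exact Finset.aestronglyMeasurable_fun_sum s fun i _ => (hF_int i).1
  · filter_upwards [hsummable] with a ha
    exact (ha.of_norm).hasSum
  · calc ∫⁻ a, ‖∑' i, F i a‖ₑ ∂μ ≤ ∫⁻ a, ∑' i, ‖F i a‖ₑ ∂μ :=
          lintegral_mono fun _ => enorm_tsum_le_tsum_enorm
      _ = ∑' i, ∫⁻ a, ‖F i a‖ₑ ∂μ := lintegral_tsum fun i => (hF_int i).1.enorm
      _ < ⊤ := hfin.lt_top

theorem statement_0_general (a b σ lam μ : ℝ) (hb : 0 < b) (hσ : 0 < σ)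
    (hlam : 0 ≤ lam) (hlt : lam < μ) :
    IntegrableOn (fun x : ℝ => x ^ (σ - 1) * Real.exp (-μ * x) * oneF1 a b (lam * x))
      (Set.Ioi 0) ∧
    ∫ x in Set.Ioi (0 : ℝ), x ^ (σ - 1) * Real.exp (-μ * x) * oneF1 a b (lam * x)
      = Real.Gamma σ * μ ^ (-σ) * twoF1 a σ b (lam / μ) := by
  have hμ : 0 < μ := hlam.trans_lt hlt
  have hb_ne : ∀ k : ℕ, b + k ≠ 0 := fun k => by positivity
  set G : ℕ → ℝ → ℝ := fun n x => x ^ (σ - 1) * exp (-μ * x) * x ^ n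
  set F : ℕ → ℝ → ℝ := fun n x => oneF1Term a b lam n * G n x
  have hseries : (fun x => x ^ (σ - 1) * exp (-μ * x) * oneF1 a b (lam * x))
      = fun x => ∑' n, F n x := by
    ext x
    rw [oneF1_eq_tsum, ← tsum_mul_left]
    refine tsum_congr fun n => ?_
    rw [oneF1Term_mul]
    ring
  have hint (n : ℕ) : IntegrableOn (F n) (Ioi 0) :=
    (integrableOn_rpow_mul_exp_neg_mul_mul_pow hσ hμ n).const_mul _
  have hval (n : ℕ) :
      ∫ x in Ioi 0, F n x = Gamma σ * μ ^ (-σ) * twoF1Term a σ b (lam / μ) n := by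
    rw [integral_const_mul, integral_rpow_mul_exp_neg_mul_mul_pow hσ hμ, twoF1Term_div]
    ring
  have hnorm (n : ℕ) :
      ∫ x in Ioi 0, ‖F n x‖ = Gamma σ * μ ^ (-σ) * |twoF1Term a σ b (lam / μ) n| := by
    have hG : EqOn (fun x => ‖F n x‖) (fun x => |oneF1Term a b lam n| * G n x) (Ioi 0) :=
      fun x (hx : 0 < x) => by
        simp only [F, G]
        rw [norm_mul, Real.norm_eq_abs, Real.norm_of_nonneg (by positivity)]
    rw [setIntegral_congr_fun measurableSet_Ioi hG, integral_const_mul,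
      integral_rpow_mul_exp_neg_mul_mul_pow hσ hμ, twoF1Term_div, abs_mul,
      abs_of_nonneg (div_nonneg (poch_nonneg hσ.le n) (pow_nonneg hμ.le n))]
    ring
  have hsum : Summable fun n => ∫ x in Ioi 0, ‖F n x‖ := by
    refine (((summable_twoF1Term a σ hb_ne ?_).abs).mul_left (Gamma σ * μ ^ (-σ))).congr
      fun n => (hnorm n).symm
    rwa [abs_div, abs_of_nonneg hlam, abs_of_pos hμ, div_lt_one hμ]
  rw [hseries]
  refine ⟨integrable_tsum_of_summable_integral_norm hint hsum, ?_⟩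
  rw [← integral_tsum_of_summable_integral_norm hint hsum, twoF1_eq_tsum, ← tsum_mul_left]
  exact tsum_congr hval

/-- Gradshteyn–Ryzhik 7.522.9 for `₁F₁`: the integral
`∫₀^∞ x^{σ−1} e^{−μx} ₁F₁(a; b; λx) dx` converges and equals
`Γ(σ) μ^{−σ} ₂F₁(a, σ; b; λ/μ)`. -/
theorem statement_0 (a b σ lam μ : ℝ) (ha : 0 ≤ a) (hb : 0 < b) (hσ : 0 < σ)
    (hlam : 0 ≤ lam) (hlt : lam < μ) :
    IntegrableOn (fun x : ℝ => x ^ (σ - 1) * Real.exp (-μ * x) * oneF1 a b (lam * x))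
      (Set.Ioi 0) ∧
    ∫ x in Set.Ioi (0 : ℝ), x ^ (σ - 1) * Real.exp (-μ * x) * oneF1 a b (lam * x)
      = Real.Gamma σ * μ ^ (-σ) * twoF1 a σ b (lam / μ) :=
  statement_0_general a b σ lam μ hb hσ hlam hlt
end

section
/- Let m_X, m_Y, Ω_X, Ω_Y, α, γ̄, C > 0 be real numbers, let f be the α-Beaulieu-Xie shadowed SNR probability density with normalizing constant C, and let γ_th > 0. Then the outage probability P_out(γ_th) = ∫₀^{γ_th} f(γ) dγ is bounded below by the bound P_out^{LB} = (θ^{m_Y}/(C^{m_X} Γ(m_X + 1))) · (γ_th/γ̄)^{α m_X/2} · exp(−(1/C)(γ_th/γ̄)^{α/2}); that is, P_out^{LB} ≤ P_out(γ_th). -/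
open Real MeasureTheory Set

/-- The α-Beaulieu-Xie shadowed SNR probability density with parameters
`mX, mY, ΩX, ΩY, α`, average SNR `γbar` and normalizing constant `C`, where
`θ = mY ΩX / (mY ΩX + mX ΩY)` and `δ = mX ΩY / (mY ΩX + mX ΩY)`. -/
noncomputable def aBXpdf (mX mY ΩX ΩY α γbar C γ : ℝ) : ℝ :=
  (α * (mY * ΩX / (mY * ΩX + mX * ΩY)) ^ mY / (2 * C ^ mX * Real.Gamma mX * γbar)) *
    (γ / γbar) ^ (α * mX / 2 - 1) * Real.exp (-(1 / C) * (γ / γbar) ^ (α / 2)) *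
    oneF1 mY mX ((mX * ΩY / (mY * ΩX + mX * ΩY)) / C * (γ / γbar) ^ (α / 2))

/-!
On `(0, γth]` the exponential factor of the density is at least its value at `γth`, and
`₁F₁(m_Y; m_X; z) ≥ 1` for `z ≥ 0` because all its terms are nonnegative. What remains is a
multiple of `(γ/γ̄)^(α m_X/2 - 1)`, whose integral over `(0, γth]` is elementary;
`Γ(m_X + 1) = m_X Γ(m_X)` turns the resulting constant into the one of the bound.
-/

section Hypergeometric

variable {a b : ℝ}

lemma poch_nonneg_s9 (ha : 0 ≤ a) (n : ℕ) : 0 ≤ poch a n :=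
  Finset.prod_nonneg fun _ _ => by positivity

lemma poch_pos (ha : 0 < a) (n : ℕ) : 0 < poch a n :=
  Finset.prod_pos fun _ _ => by positivity

lemma poch_div_poch_le (ha : 0 ≤ a) (hb : 0 < b) (n : ℕ) :
    poch a n / poch b n ≤ max 1 (a / b) ^ n := by
  have hab : a ≤ max 1 (a / b) * b := (div_le_iff₀ hb).1 (le_max_right _ _)
  rw [div_le_iff₀ (poch_pos hb n)]
  calc poch a n ≤ ∏ i ∈ Finset.range n, max 1 (a / b) * (b + i) :=
        Finset.prod_le_prod (fun i _ => by positivity) fun i _ => by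
          nlinarith [le_max_left 1 (a / b), Nat.cast_nonneg (α := ℝ) i]
    _ = max 1 (a / b) ^ n * poch b n := by
        rw [Finset.prod_mul_distrib, Finset.prod_const, Finset.card_range, poch]

lemma oneF1_term_nonneg (ha : 0 ≤ a) (hb : 0 < b) {z : ℝ} (hz : 0 ≤ z) (n : ℕ) :
    0 ≤ poch a n / poch b n * z ^ n / n.factorial := by
  have := poch_nonneg_s9 ha n
  have := poch_pos hb n
  positivity

lemma summable_oneF1_term (ha : 0 ≤ a) (hb : 0 < b) (z : ℝ) :
    Summable fun n : ℕ => poch a n / poch b n * z ^ n / n.factorial := by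
  refine .of_norm_bounded (Real.summable_pow_div_factorial (max 1 (a / b) * |z|)) fun n => ?_
  rw [Real.norm_eq_abs, abs_div, abs_mul, abs_of_nonneg (div_nonneg (poch_nonneg_s9 ha n)
    (poch_pos hb n).le), Nat.abs_cast, abs_pow, mul_pow]
  gcongr
  exact poch_div_poch_le ha hb n

lemma one_le_oneF1 (ha : 0 ≤ a) (hb : 0 < b) {z : ℝ} (hz : 0 ≤ z) : 1 ≤ oneF1 a b z := by
  simpa [oneF1, poch] using (summable_oneF1_term ha hb z).le_tsum 0
    fun n _ => oneF1_term_nonneg ha hb hz n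

lemma monotoneOn_oneF1 (ha : 0 ≤ a) (hb : 0 < b) : MonotoneOn (oneF1 a b) (Ici 0) :=
  fun z hz w _ hzw => (summable_oneF1_term ha hb z).tsum_le_tsum (fun n => by
    have := poch_nonneg_s9 ha n
    have := poch_pos hb n
    gcongr) (summable_oneF1_term ha hb w)

lemma measurable_oneF1 (ha : 0 ≤ a) (hb : 0 < b) : Measurable (oneF1 a b) :=
  measurable_of_tendsto_metrizable (fun N => by fun_prop)
    (tendsto_pi_nhds.2 fun z => (summable_oneF1_term ha hb z).hasSum.tendsto_sum_nat)

lemma exp_neg_mul_mul_oneF1_mem_Icc (ha : 0 ≤ a) (hb : 0 < b) {c d w W : ℝ}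
    (hc : 0 ≤ c) (hd : 0 ≤ d) (hw : 0 ≤ w) (hwW : w ≤ W) :
    exp (-c * w) * oneF1 a b (d * w) ∈ Icc (exp (-c * W)) (oneF1 a b (d * W)) := by
  have hF : 1 ≤ oneF1 a b (d * w) := one_le_oneF1 ha hb (by positivity)
  constructor
  · calc exp (-c * W) ≤ exp (-c * w) := exp_le_exp.2 (by nlinarith)
      _ ≤ exp (-c * w) * oneF1 a b (d * w) := le_mul_of_one_le_right (exp_pos _).le hF
  · calc exp (-c * w) * oneF1 a b (d * w) ≤ 1 * oneF1 a b (d * w) := by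
          gcongr
          exact exp_le_one_iff.2 (by nlinarith)
      _ ≤ oneF1 a b (d * W) := by
          rw [one_mul]
          exact monotoneOn_oneF1 ha hb (mul_nonneg hd hw) (mul_nonneg hd (hw.trans hwW))
            (by gcongr)

end Hypergeometric

section PowerIntegral

variable {c p t : ℝ}

lemma intervalIntegrable_div_rpow (hc : c ≠ 0) (hp : 0 < p) :
    IntervalIntegrable (fun x => (x / c) ^ (p - 1)) volume 0 t := by
  have := (intervalIntegral.intervalIntegrable_rpow' (a := 0) (b := t / c)
    (r := p - 1) (by linarith)).comp_mul_left (c := c⁻¹)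
  simpa [div_eq_inv_mul, hc] using this

lemma integral_div_rpow (hc : c ≠ 0) (hp : 0 < p) :
    ∫ x in (0)..t, (x / c) ^ (p - 1) = c * ((t / c) ^ p / p) := by
  rw [intervalIntegral.integral_comp_div (fun x => x ^ (p - 1)) hc, zero_div,
    integral_rpow (Or.inl (by linarith)), sub_add_cancel, zero_rpow hp.ne', sub_zero, smul_eq_mul]

lemma mul_le_setIntegral_div_rpow_mul (hc : 0 < c) (hp : 0 < p) (ht : 0 ≤ t) {h : ℝ → ℝ}
    {E M : ℝ} (hh : AEStronglyMeasurable h (volume.restrict (Ioc 0 t)))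
    (hE : ∀ x ∈ Ioc 0 t, E ≤ h x) (hM : ∀ x ∈ Ioc 0 t, |h x| ≤ M) :
    E * (c * ((t / c) ^ p / p)) ≤ ∫ x in Ioc 0 t, (x / c) ^ (p - 1) * h x := by
  have hint : IntegrableOn (fun x => (x / c) ^ (p - 1)) (Ioc 0 t) :=
    (intervalIntegrable_iff_integrableOn_Ioc_of_le ht).1 (intervalIntegrable_div_rpow hc.ne' hp)
  have hhM : ∀ᵐ x ∂volume.restrict (Ioc 0 t), ‖h x‖ ≤ M :=
    (ae_restrict_iff' measurableSet_Ioc).2 (.of_forall hM)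
  calc E * (c * ((t / c) ^ p / p)) = ∫ x in Ioc 0 t, (x / c) ^ (p - 1) * E := by
        rw [integral_mul_const, ← intervalIntegral.integral_of_le ht, integral_div_rpow hc.ne' hp,
          mul_comm]
    _ ≤ ∫ x in Ioc 0 t, (x / c) ^ (p - 1) * h x :=
        setIntegral_mono_on (hint.mul_const E) (hint.mul_bdd hh hhM) measurableSet_Ioc
          fun x hx => mul_le_mul_of_nonneg_left (hE x hx) (rpow_nonneg (by
            have := hx.1; positivity) _)

end PowerIntegral

/-- The lower bound `P_out^{LB}` on the outage probability of the
α-Beaulieu-Xie shadowed channel. -/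
theorem statement_9 (mX mY ΩX ΩY α γbar C : ℝ) (hmX : 0 < mX) (hmY : 0 < mY)
    (hΩX : 0 < ΩX) (hΩY : 0 < ΩY) (hα : 0 < α) (hγbar : 0 < γbar) (hC : 0 < C)
    (γth : ℝ) (hγth : 0 < γth) :
    (mY * ΩX / (mY * ΩX + mX * ΩY)) ^ mY / (C ^ mX * Real.Gamma (mX + 1)) *
        (γth / γbar) ^ (α * mX / 2) * Real.exp (-(1 / C) * (γth / γbar) ^ (α / 2))
      ≤ ∫ γ in Set.Ioc (0 : ℝ) γth, aBXpdf mX mY ΩX ΩY α γbar C γ := by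
  set θ := mY * ΩX / (mY * ΩX + mX * ΩY)
  set δ := mX * ΩY / (mY * ΩX + mX * ΩY)
  set K := α * θ ^ mY / (2 * C ^ mX * Real.Gamma mX * γbar)
  set W := (γth / γbar) ^ (α / 2)
  set h := fun γ => exp (-(1 / C) * (γ / γbar) ^ (α / 2)) *
    oneF1 mY mX (δ / C * (γ / γbar) ^ (α / 2))
  have hbounds (γ : ℝ) (hγ : γ ∈ Ioc 0 γth) :
      h γ ∈ Icc (exp (-(1 / C) * W)) (oneF1 mY mX (δ / C * W)) :=
    exp_neg_mul_mul_oneF1_mem_Icc hmY.le hmX (by positivity) (by positivity)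
      (by have := hγ.1; positivity)
      (rpow_le_rpow (div_nonneg hγ.1.le hγbar.le) (by gcongr; exact hγ.2) (by positivity))
  have hmeas : Measurable h := by
    have := measurable_oneF1 hmY.le hmX
    fun_prop
  have hlower := mul_le_setIntegral_div_rpow_mul (p := α * mX / 2) hγbar (by positivity)
    hγth.le hmeas.aestronglyMeasurable (fun γ hγ => (hbounds γ hγ).1)
    fun γ hγ => (abs_of_nonneg ((exp_pos _).le.trans (hbounds γ hγ).1)).trans_le
      (hbounds γ hγ).2
  calc θ ^ mY / (C ^ mX * Real.Gamma (mX + 1)) * (γth / γbar) ^ (α * mX / 2) *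
        exp (-(1 / C) * W)
      = K * (exp (-(1 / C) * W) * (γbar * ((γth / γbar) ^ (α * mX / 2) / (α * mX / 2)))) := by
        simp only [K, Real.Gamma_add_one hmX.ne']
        field_simp
    _ ≤ K * ∫ γ in Ioc 0 γth, (γ / γbar) ^ (α * mX / 2 - 1) * h γ := by gcongr
    _ = ∫ γ in Ioc 0 γth, aBXpdf mX mY ΩX ΩY α γbar C γ := by
        rw [← integral_const_mul]
        simp only [aBXpdf, h, K, θ, δ, mul_assoc]
end
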